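/- arXiv:0807.0979 — 4 statements merged into one kernel-verified Lean document; each statement's English description precedes it below -/
import Mathlib

section
/- Let R be a discrete valuation ring with fraction field K and valuation v_R, and let p be a prime. Let f = T^p + a_{p-1}T^{p-1} + ⋯ + a_0 ∈ K[T] be a separable polynomial with a_0 ≠ 0, p ∤ v_R(a_0), and min_{i≥0} v_R(a_i) > p · max_{i≥0}(v_R(a_0) − v_R(a_i)). Then K' = K[T]/(f) is a field, the integral closure of R in K' is a discrete valuation ring, and its ramification index over R equals p. -/
/-!
The hypothesis on the valuations says that the points `(i, v(aᵢ))`, `0 < i < p`, lie strictly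
above the segment joining `(0, v(a₀))` to `(p, 0)`: the Newton polygon of `f` is that single
segment. Let `L/K` be finite separable with a root `α` of `f`, and `w` the valuation of a prime of
the integral closure of `R` in `L`, with ramification index `e`, so that `w = e · v` on `K`. The
Newton polygon condition survives this rescaling, and at the root the two extreme terms `αᵖ` and
`a₀` must have equal value, for otherwise the larger one would strictly dominate every other term
of `∑ aᵢ αⁱ = 0`. Hence `p · w(α) = e · v(a₀)`, and since `p` is a prime not dividing `v(a₀)`,
`p ∣ e`. The fundamental identity `∑ eᵢ fᵢ = [L : K]` now gives `[L : K] ≥ p`, so `f` is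
irreducible (take `L = K(α)`); and for `L = K[T]/(f)` there is a single prime above, with `e = p`,
so the integral closure is a DVR, totally ramified over `R`.
-/

open Polynomial IsLocalRing Module WithZero IsDedekindDomain IntermediateField
open IsDiscreteValuationRing (not_a_field irreducible_iff_uniformizer)

theorem mul_pow_lt_max_of_pow_lt {Γ₀ : Type*} [LinearOrderedCommGroupWithZero Γ₀]
    {a b c : Γ₀} {n i : ℕ} (hi : i < n) (hc : c ^ n < b ^ (n - i)) :
    c * a ^ i < max (a ^ n) b := by
  set M := max (a ^ n) b
  have hb : b ≠ 0 := by
    rintro rfl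
    rw [zero_pow (by omega)] at hc
    exact not_lt_zero hc
  have hM : M ≠ 0 := ne_of_gt (lt_of_lt_of_le (zero_lt_iff.mpr hb) (le_max_right _ _))
  rw [← pow_lt_pow_iff_left₀ zero_le zero_le (by omega : n ≠ 0)]
  calc (c * a ^ i) ^ n = c ^ n * (a ^ n) ^ i := by rw [mul_pow, ← pow_mul, ← pow_mul, mul_comm i]
    _ ≤ c ^ n * M ^ i := by gcongr; exact le_max_left _ _
    _ < b ^ (n - i) * M ^ i := mul_lt_mul_of_pos_right hc (zero_lt_iff.mpr (pow_ne_zero _ hM))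
    _ ≤ M ^ (n - i) * M ^ i := by gcongr; exact le_max_right _ _
    _ = M ^ n := by rw [← pow_add, Nat.sub_add_cancel hi.le]

/-- With `v = -log ν`: the points `(i, v(aᵢ))`, `0 < i < deg f`, lie strictly above the segment
joining `(0, v(a₀))` to `(deg f, 0)`. -/
def Polynomial.HasStrictNewtonSegment {A Γ₀ : Type*} [CommRing A]
    [LinearOrderedCommGroupWithZero Γ₀] (f : A[X]) (ν : Valuation A Γ₀) : Prop :=
  ∀ i, 0 < i → i < f.natDegree → ν (f.coeff i) ^ f.natDegree < ν (f.coeff 0) ^ (f.natDegree - i)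

theorem Polynomial.HasStrictNewtonSegment.map {K L Γ₀ : Type*} [Field K] [Field L]
    [LinearOrderedCommGroupWithZero Γ₀] {f : K[X]} {ν : Valuation K Γ₀} {ν' : Valuation L Γ₀}
    {φ : K →+* L} {e : ℕ} (he : e ≠ 0) (hφ : ∀ x, ν' (φ x) = ν x ^ e)
    (hf : f.HasStrictNewtonSegment ν) : (f.map φ).HasStrictNewtonSegment ν' := by
  intro i hi0 hi
  rw [natDegree_map] at hi ⊢
  rw [coeff_map, coeff_map, hφ, hφ, ← pow_mul, ← pow_mul, mul_comm e, mul_comm e, pow_mul,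
    pow_mul]
  exact pow_lt_pow_left₀ (hf i hi0 hi) zero_le he

theorem Valuation.pow_natDegree_eq_of_isRoot {A Γ₀ : Type*} [CommRing A]
    [LinearOrderedCommGroupWithZero Γ₀] (ν : Valuation A Γ₀) {f : A[X]} (hf : f.Monic)
    (hcoeff : f.HasStrictNewtonSegment ν) {x : A} (hx : f.IsRoot x) :
    ν x ^ f.natDegree = ν (f.coeff 0) := by
  set n := f.natDegree
  by_contra hne
  have hmid : ∀ i, 0 < i → i < n → ν (f.coeff i * x ^ i) < max (ν x ^ n) (ν (f.coeff 0)) :=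
    fun i hi hin => by
      rw [ν.map_mul, ν.map_pow]; exact mul_pow_lt_max_of_pow_lt hin (hcoeff i hi hin)
  have hterm0 : ν (f.coeff 0 * x ^ 0) = ν (f.coeff 0) := by simp
  have htermn : ν (f.coeff n * x ^ n) = ν x ^ n := by simp [n, hf.coeff_natDegree]
  -- the larger of `ν(xⁿ)` and `ν(a₀)` strictly dominates every other term of `f(x) = 0`
  obtain ⟨j, hj, hj0, hlt⟩ : ∃ j ∈ Finset.range (n + 1), ν (f.coeff j * x ^ j) ≠ 0 ∧
      ∀ i ∈ Finset.range (n + 1) \ {j}, ν (f.coeff i * x ^ i) < ν (f.coeff j * x ^ j) := by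
    rcases lt_or_gt_of_ne hne with h | h
    · refine ⟨0, by simp, by rw [hterm0]; exact ne_of_gt (zero_le.trans_lt h), fun i hi => ?_⟩
      simp only [Finset.mem_sdiff, Finset.mem_range, Finset.mem_singleton] at hi
      rw [hterm0]
      rcases (by omega : i = n ∨ i < n) with rfl | hin
      · rwa [htermn]
      · simpa [max_eq_right h.le] using hmid i (by omega) hin
    · refine ⟨n, by simp, by rw [htermn]; exact ne_of_gt (zero_le.trans_lt h), fun i hi => ?_⟩
      simp only [Finset.mem_sdiff, Finset.mem_range, Finset.mem_singleton] at hi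
      rw [htermn]
      rcases Nat.eq_zero_or_pos i with rfl | hi0
      · rwa [hterm0]
      · simpa [max_eq_left h.le] using hmid i hi0 (by omega)
  have hsum := ν.map_sum_eq_of_lt hj hlt
  rw [← eval_eq_sum_range, hx.eq_zero, ν.map_zero] at hsum
  exact hj0 hsum.symm

theorem WithZero.dvd_of_pow_eq_pow_of_not_dvd_log {y z : ℤᵐ⁰} {n e : ℕ} (hn : n.Prime)
    (hz : ¬ (n : ℤ) ∣ log z) (h : y ^ n = z ^ e) : n ∣ e := by
  have hlog := congrArg log h
  rw [log_pow, log_pow] at hlog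
  have : (n : ℤ) ∣ e * log z := ⟨log y, by simpa [mul_comm] using hlog.symm⟩
  rcases (Nat.prime_iff_prime_int.mp hn).dvd_or_dvd this with h | h
  · exact Int.natCast_dvd_natCast.mp h
  · exact absurd h hz

namespace IsDedekindDomain.HeightOneSpectrum

variable {A K L B : Type*} [CommRing A] [IsDedekindDomain A] [CommRing B] [IsDedekindDomain B]
  [Algebra A B] [Module.IsTorsionFree A B] [Field K] [Field L] [Algebra K L]
  [Algebra A K] [IsFractionRing A K] [Algebra A L] [IsScalarTower A K L]
  [Algebra B L] [IsFractionRing B L] [IsScalarTower A B L]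

theorem dvd_ramificationIdx'_of_aeval_eq_zero (v : HeightOneSpectrum A) (w : HeightOneSpectrum B)
    [w.asIdeal.LiesOver v.asIdeal] {f : K[X]} (hf : f.Monic) (hp : f.natDegree.Prime)
    (hcoeff : f.HasStrictNewtonSegment (v.valuation K))
    (hlog : ¬ (f.natDegree : ℤ) ∣ log (v.valuation K (f.coeff 0)))
    {α : L} (hα : aeval α f = 0) :
    f.natDegree ∣ v.asIdeal.ramificationIdx' w.asIdeal := by
  have he : v.asIdeal.ramificationIdx' w.asIdeal ≠ 0 :=
    Ideal.IsDedekindDomain.ramificationIdx'_ne_zero_of_liesOver w.asIdeal v.ne_bot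
  have hnewton := (w.valuation L).pow_natDegree_eq_of_isRoot (hf.map (algebraMap K L))
    (hcoeff.map he fun x => (valuation_liesOver L v w x).symm)
    (by rwa [IsRoot, eval_map_algebraMap])
  rw [natDegree_map, coeff_map, ← valuation_liesOver L v w] at hnewton
  exact dvd_of_pow_eq_pow_of_not_dvd_log hp hlog hnewton

end IsDedekindDomain.HeightOneSpectrum

section PrimesOver

variable {R S : Type*} [CommRing R] [IsDomain R] [IsDiscreteValuationRing R]
  [CommRing S] [Algebra R S] [Algebra.IsIntegral R S]

theorem mem_primesOver_maximalIdeal [IsDomain S] {P : Ideal S} [P.IsPrime] (hP : P ≠ ⊥) :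
    P ∈ (maximalIdeal R).primesOver S := by
  refine ⟨‹_›, ⟨(eq_maximalIdeal ?_).symm⟩⟩
  exact (Ideal.IsPrime.under R P).isMaximal (Ideal.under_ne_bot R hP)

variable [FaithfulSMul R S]

theorem isDiscreteValuationRing_of_subsingleton_primesOver [IsDedekindDomain S]
    [Subsingleton ((maximalIdeal R).primesOver S)] : IsDiscreteValuationRing S := by
  obtain ⟨q⟩ := (inferInstance : Nonempty ((maximalIdeal R).primesOver S))
  have hq : q.1 ≠ ⊥ := Ideal.ne_bot_of_liesOver_of_ne_bot (not_a_field R) q.1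
  have huniq (P : Ideal S) (hP : P ≠ ⊥) (hPp : P.IsPrime) : P = q.1 :=
    congrArg Subtype.val (Subsingleton.elim ⟨P, mem_primesOver_maximalIdeal hP⟩ q)
  have hfin : {P : Ideal S | P.IsPrime}.Finite := by
    refine ((Set.finite_singleton q.1).insert ⊥).subset fun P (hP : P.IsPrime) => ?_
    by_cases h : P = ⊥
    · exact Or.inl h
    · exact Or.inr (huniq P h hP)
  exact (IsDiscreteValuationRing.iff_pid_with_one_nonzero_prime S).mpr
    ⟨IsPrincipalIdealRing.of_finite_primes hfin, q.1, ⟨hq, q.2.1⟩, fun P hP => huniq P hP.1 hP.2⟩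

theorem associated_pow_ramificationIdx [IsDomain S] [IsDiscreteValuationRing S] {π : R}
    (hπ : Irreducible π) {ϖ : S} (hϖ : Irreducible ϖ) :
    Associated (algebraMap R S π) (ϖ ^ (maximalIdeal S).ramificationIdx R) := by
  have hπS : algebraMap R S π ≠ 0 :=
    (map_ne_zero_iff _ (FaithfulSMul.algebraMap_injective R S)).mpr hπ.ne_zero
  obtain ⟨n, hn⟩ := IsDiscreteValuationRing.associated_pow_irreducible hπS hϖ
  have hmap : (maximalIdeal R).map (algebraMap R S) = maximalIdeal S ^ n := by
    rw [(irreducible_iff_uniformizer π).mp hπ, Ideal.map_span, Set.image_singleton,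
      Ideal.span_singleton_eq_span_singleton.mpr hn, ← Ideal.span_singleton_pow,
      (irreducible_iff_uniformizer ϖ).mp hϖ]
  have := (mem_primesOver_maximalIdeal (R := R) (not_a_field S)).2
  rw [Ideal.IsDedekindDomain.ramificationIdx_eq_multiplicity (maximalIdeal R) _
      (by rw [hmap]; exact pow_ne_zero _ (not_a_field S)), hmap,
    multiplicity_pow_self (not_a_field S)]
  · exact hn
  · rw [Ideal.isUnit_iff]; exact (maximalIdeal.isMaximal S).ne_top

end PrimesOver

section Extension

variable {R K L S : Type*} [CommRing R] [IsDomain R] [IsDiscreteValuationRing R]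
  [Field K] [Algebra R K] [IsFractionRing R K] [Field L] [Algebra K L] [Algebra R L]
  [IsScalarTower R K L] [CommRing S] [IsDedekindDomain S] [Algebra R S] [Algebra S L]
  [IsFractionRing S L] [IsScalarTower R S L] [Module.Finite R S] [Module.IsTorsionFree R S]

variable (K L) in
theorem sum_ramificationIdx_mul_inertiaDeg_primesOver :
    ∑ q : (maximalIdeal R).primesOver S, q.1.ramificationIdx R * q.1.inertiaDeg R =
      finrank K L := by
  rw [Ideal.sum_ramification_inertia_eq_finrank, IsFractionRing.finrank_eq R K S L]

variable (K L) in
theorem ramificationIdx_le_finrank (q : (maximalIdeal R).primesOver S) :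
    q.1.ramificationIdx R ≤ finrank K L := by
  rw [← sum_ramificationIdx_mul_inertiaDeg_primesOver (R := R) (S := S) K L]
  calc q.1.ramificationIdx R ≤ q.1.ramificationIdx R * q.1.inertiaDeg R :=
        Nat.le_mul_of_pos_right _ (Ideal.inertiaDeg_pos _ _)
    _ ≤ _ := Finset.single_le_sum (f := fun q : (maximalIdeal R).primesOver S =>
        q.1.ramificationIdx R * q.1.inertiaDeg R) (fun _ _ => Nat.zero_le _) (Finset.mem_univ q)

theorem subsingleton_primesOver_of_finrank_le_ramificationIdx
    (h : ∀ q : (maximalIdeal R).primesOver S, finrank K L ≤ q.1.ramificationIdx R) :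
    Subsingleton ((maximalIdeal R).primesOver S) := by
  classical
  refine ⟨fun q q' => by_contra fun hne => ?_⟩
  have hle := Finset.sum_le_sum_of_subset (f := fun q : (maximalIdeal R).primesOver S =>
    q.1.ramificationIdx R * q.1.inertiaDeg R) (Finset.subset_univ {q, q'})
  rw [Finset.sum_pair hne, sum_ramificationIdx_mul_inertiaDeg_primesOver K L] at hle
  have := (h q).trans (Nat.le_mul_of_pos_right _ (Ideal.inertiaDeg_pos q.1 R))
  have := Nat.mul_pos (Ideal.ramificationIdx_pos q'.1 R) (Ideal.inertiaDeg_pos q'.1 R)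
  omega

theorem isDiscreteValuationRing_of_finrank_le_ramificationIdx {π : R} (hπ : Irreducible π)
    (h : ∀ q : (maximalIdeal R).primesOver S, finrank K L ≤ q.1.ramificationIdx R) :
    IsDiscreteValuationRing S ∧
      ∀ ϖ : S, Irreducible ϖ → Associated (algebraMap R S π) (ϖ ^ finrank K L) := by
  have := subsingleton_primesOver_of_finrank_le_ramificationIdx h
  have := isDiscreteValuationRing_of_subsingleton_primesOver (R := R) (S := S)
  refine ⟨this, fun ϖ hϖ => ?_⟩
  let m : (maximalIdeal R).primesOver S :=
    ⟨_, mem_primesOver_maximalIdeal (not_a_field S)⟩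
  have he : (maximalIdeal S).ramificationIdx R = finrank K L :=
    (ramificationIdx_le_finrank K L m).antisymm (h m)
  rw [← he]
  exact associated_pow_ramificationIdx hπ hϖ

theorem natDegree_le_ramificationIdx_of_aeval_eq_zero {f : K[X]} (hf : f.Monic)
    (hp : f.natDegree.Prime)
    (hcoeff : f.HasStrictNewtonSegment ((IsDiscreteValuationRing.maximalIdeal R).valuation K))
    (hlog : ¬ (f.natDegree : ℤ) ∣
      log ((IsDiscreteValuationRing.maximalIdeal R).valuation K (f.coeff 0)))
    {α : L} (hα : aeval α f = 0) (q : (maximalIdeal R).primesOver S) :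
    f.natDegree ≤ q.1.ramificationIdx R := by
  let w : HeightOneSpectrum S :=
    ⟨q.1, q.2.1, Ideal.ne_bot_of_liesOver_of_ne_bot (not_a_field R) q.1⟩
  have : w.asIdeal.LiesOver (IsDiscreteValuationRing.maximalIdeal R).asIdeal := q.2.2
  have hdvd := (IsDiscreteValuationRing.maximalIdeal R).dvd_ramificationIdx'_of_aeval_eq_zero w
    hf hp hcoeff hlog hα
  change f.natDegree ∣ (maximalIdeal R).ramificationIdx' q.1 at hdvd
  rw [Ideal.ramificationIdx'_eq_ramificationIdx _ _ (not_a_field R)] at hdvd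
  exact Nat.le_of_dvd (Ideal.ramificationIdx_pos _ _) hdvd

end Extension

section IntegralClosure

variable {R K : Type*} [CommRing R] [IsDomain R] [IsDiscreteValuationRing R]
  [Field K] [Algebra R K] [IsFractionRing R K] (L : Type*) [Field L] [Algebra K L] [Algebra R L]
  [IsScalarTower R K L] [FiniteDimensional K L] [Algebra.IsSeparable K L]

theorem natDegree_le_finrank_of_aeval_eq_zero {f : K[X]} (hf : f.Monic) (hp : f.natDegree.Prime)
    (hcoeff : f.HasStrictNewtonSegment ((IsDiscreteValuationRing.maximalIdeal R).valuation K))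
    (hlog : ¬ (f.natDegree : ℤ) ∣
      log ((IsDiscreteValuationRing.maximalIdeal R).valuation K (f.coeff 0)))
    {α : L} (hα : aeval α f = 0) : f.natDegree ≤ finrank K L := by
  have : Module.IsTorsionFree R L := .trans_faithfulSMul R K L
  have := integralClosure.isDedekindDomain R K L
  have := IsIntegralClosure.finite R K L (integralClosure R L)
  have := IsIntegralClosure.isFractionRing_of_finite_extension R K L (integralClosure R L)
  obtain ⟨q⟩ := (inferInstance : Nonempty ((maximalIdeal R).primesOver (integralClosure R L)))
  exact (natDegree_le_ramificationIdx_of_aeval_eq_zero hf hp hcoeff hlog hα q).trans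
    (ramificationIdx_le_finrank K L q)

theorem isDiscreteValuationRing_integralClosure_of_finrank_eq {f : K[X]} (hf : f.Monic)
    (hp : f.natDegree.Prime)
    (hcoeff : f.HasStrictNewtonSegment ((IsDiscreteValuationRing.maximalIdeal R).valuation K))
    (hlog : ¬ (f.natDegree : ℤ) ∣
      log ((IsDiscreteValuationRing.maximalIdeal R).valuation K (f.coeff 0)))
    {α : L} (hα : aeval α f = 0) (hL : finrank K L = f.natDegree) {π : R} (hπ : Irreducible π) :
    IsDiscreteValuationRing (integralClosure R L) ∧ ∀ ϖ : integralClosure R L, Irreducible ϖ →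
      Associated (algebraMap R (integralClosure R L) π) (ϖ ^ f.natDegree) := by
  have : Module.IsTorsionFree R L := .trans_faithfulSMul R K L
  have := integralClosure.isDedekindDomain R K L
  have := IsIntegralClosure.finite R K L (integralClosure R L)
  have := IsIntegralClosure.isFractionRing_of_finite_extension R K L (integralClosure R L)
  rw [← hL]
  exact isDiscreteValuationRing_of_finrank_le_ramificationIdx hπ fun q =>
    hL ▸ natDegree_le_ramificationIdx_of_aeval_eq_zero hf hp hcoeff hlog hα q

end IntegralClosure

section NormalizedValuation

variable {R K : Type*} [CommRing R] [IsDomain R] [IsDiscreteValuationRing R]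
  [Field K] [Algebra R K] [IsFractionRing R K] {π : R} {v : K → ℤ}

theorem intValuation_maximalIdeal_eq_exp_neg (hπ : Irreducible π)
    (hv_mul : ∀ x y : K, x ≠ 0 → y ≠ 0 → v (x * y) = v x + v y)
    (hv_ring : ∀ x : K, x ≠ 0 → (0 ≤ v x ↔ ∃ r : R, algebraMap R K r = x))
    (hv_π : v (algebraMap R K π) = 1) {r : R} (hr : r ≠ 0) :
    (IsDiscreteValuationRing.maximalIdeal R).intValuation r = exp (-v (algebraMap R K r)) := by
  have hv_one : v 1 = 0 := by simpa using hv_mul 1 1 one_ne_zero one_ne_zero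
  have hv_unit (u : Rˣ) : v (algebraMap R K u) = 0 := by
    have hu : algebraMap R K u ≠ 0 := by simp
    have hu' : algebraMap R K ↑u⁻¹ ≠ 0 := by simp
    have h := hv_mul _ _ hu hu'
    rw [← map_mul, Units.mul_inv, map_one, hv_one] at h
    have := (hv_ring _ hu).mpr ⟨u, rfl⟩
    have := (hv_ring _ hu').mpr ⟨_, rfl⟩
    omega
  have hπK : algebraMap R K π ≠ 0 := by simpa using hπ.ne_zero
  have hv_pow (n : ℕ) : v (algebraMap R K π ^ n) = n := by
    induction n with
    | zero => simpa using hv_one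
    | succ n ih => rw [pow_succ, hv_mul _ _ (pow_ne_zero _ hπK) hπK, ih, hv_π]; push_cast; ring
  obtain ⟨n, u, rfl⟩ := IsDiscreteValuationRing.eq_unit_mul_pow_irreducible hr hπ
  rw [map_mul, map_mul, map_pow, map_pow, hv_mul _ _ (by simp) (pow_ne_zero _ hπK), hv_unit,
    hv_pow, HeightOneSpectrum.intValuation_eq_one_iff.mpr,
    HeightOneSpectrum.intValuation_singleton _ hπ.ne_zero
      ((irreducible_iff_uniformizer π).mp hπ), ← exp_nsmul]
  · simp
  · exact (mem_maximalIdeal _).not.mpr (not_not.mpr u.isUnit)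

theorem valuation_maximalIdeal_eq_exp_neg (hπ : Irreducible π)
    (hv_mul : ∀ x y : K, x ≠ 0 → y ≠ 0 → v (x * y) = v x + v y)
    (hv_ring : ∀ x : K, x ≠ 0 → (0 ≤ v x ↔ ∃ r : R, algebraMap R K r = x))
    (hv_π : v (algebraMap R K π) = 1) {x : K} (hx : x ≠ 0) :
    (IsDiscreteValuationRing.maximalIdeal R).valuation K x = exp (-v x) := by
  obtain ⟨r, s, hs, rfl⟩ := IsFractionRing.div_surjective (A := R) x
  have hs0 : s ≠ 0 := nonZeroDivisors.ne_zero hs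
  have hr0 : r ≠ 0 := by rintro rfl; simp at hx
  have hdiv := hv_mul _ _ hx (by simpa using hs0 : algebraMap R K s ≠ 0)
  rw [div_mul_cancel₀ _ (by simpa using hs0)] at hdiv
  rw [map_div₀, HeightOneSpectrum.valuation_of_algebraMap,
    HeightOneSpectrum.valuation_of_algebraMap,
    intValuation_maximalIdeal_eq_exp_neg hπ hv_mul hv_ring hv_π hr0,
    intValuation_maximalIdeal_eq_exp_neg hπ hv_mul hv_ring hv_π hs0, ← exp_sub, hdiv]
  ring_nf

end NormalizedValuation

theorem hasStrictNewtonSegment_of_exp_neg {K : Type*} [Field K] {ν : Valuation K ℤᵐ⁰}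
    {v : K → ℤ} (hν : ∀ x, x ≠ 0 → ν x = exp (-v x)) {f : K[X]} (ha0 : f.coeff 0 ≠ 0)
    (hmin : ∀ i < f.natDegree, f.coeff i ≠ 0 →
      v (f.coeff i) > (f.natDegree : ℤ) * (v (f.coeff 0) - v (f.coeff i))) :
    f.HasStrictNewtonSegment ν := by
  intro i hi0 hi
  set n := f.natDegree
  rw [hν _ ha0, ← exp_nsmul]
  by_cases hai : f.coeff i = 0
  · rw [hai, ν.map_zero, zero_pow (by omega)]
    exact zero_lt_iff.mpr exp_ne_zero
  rw [hν _ hai, ← exp_nsmul, exp_lt_exp, nsmul_eq_mul, nsmul_eq_mul, Nat.cast_sub hi.le]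
  have h0 := hmin 0 (by omega) ha0
  have h := hmin i hi hai
  simp only [sub_self, mul_zero] at h0
  have hin : (i : ℤ) < n := by exact_mod_cast hi
  have hi1 : (1 : ℤ) ≤ i := by exact_mod_cast hi0
  -- from `(n + 1) v(aᵢ) > n v(a₀)` and `v(a₀) > 0`
  have h1 : (n : ℤ) * ((n + 1) * v (f.coeff i)) > n * (n * v (f.coeff 0)) :=
    mul_lt_mul_of_pos_left (by linarith) (by omega)
  nlinarith [mul_nonneg (by linarith : (0 : ℤ) ≤ i - 1) h0.le]

/-- Lemma 2.3(ii).  Let `R` be a DVR with fraction field `K` and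
normalized valuation `v`.  Let `f = T^p + a_{p-1}T^{p-1} + ⋯ + a_0 ∈ K[T]` be a separable
monic polynomial of prime degree `p` with `a_0 ≠ 0`, `p ∤ v(a_0)` and
`min_i v(a_i) > p · max_i (v(a_0) − v(a_i))` (indices of nonzero coefficients `a_i`, `i < p`).
Then `K' = K[T]/(f)` is a field (i.e. `f` is irreducible), the integral closure of `R` in
`K'` is a DVR, and its ramification index over `R` equals `p`. -/
theorem statement1
    (R : Type*) [CommRing R] [IsDomain R] [IsDiscreteValuationRing R]
    (K : Type*) [Field K] [Algebra R K] [IsFractionRing R K]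
    (π : R) (hπ : Irreducible π)
    -- the normalized valuation `v` on `K` associated with `R`:
    (v : K → ℤ)
    (hv_mul : ∀ x y : K, x ≠ 0 → y ≠ 0 → v (x * y) = v x + v y)
    (hv_ring : ∀ x : K, x ≠ 0 → (0 ≤ v x ↔ ∃ r : R, algebraMap R K r = x))
    (hv_π : v (algebraMap R K π) = 1)
    (p : ℕ) (hp : p.Prime) (f : Polynomial K)
    (hmonic : f.Monic) (hdeg : f.natDegree = p) (hsep : f.Separable)
    (ha0 : f.coeff 0 ≠ 0)
    (hval : ¬ (p : ℤ) ∣ v (f.coeff 0))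
    (hmin : ∀ i < p, ∀ j < p, f.coeff i ≠ 0 → f.coeff j ≠ 0 →
      v (f.coeff i) > (p : ℤ) * (v (f.coeff 0) - v (f.coeff j))) :
    ∃ hf : Irreducible f,
      letI : Fact (Irreducible f) := ⟨hf⟩
      IsDiscreteValuationRing (integralClosure R (AdjoinRoot f)) ∧
      ∀ ϖ : integralClosure R (AdjoinRoot f), Irreducible ϖ →
        Associated (algebraMap R (integralClosure R (AdjoinRoot f)) π) (ϖ ^ p) := by
  subst hdeg
  have hν (x : K) (hx : x ≠ 0) := valuation_maximalIdeal_eq_exp_neg hπ hv_mul hv_ring hv_π hx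
  have hcoeff := hasStrictNewtonSegment_of_exp_neg hν ha0 fun i hi hai => hmin i hi i hi hai hai
  have hlog : ¬ (f.natDegree : ℤ) ∣
      log ((IsDiscreteValuationRing.maximalIdeal R).valuation K (f.coeff 0)) := by
    rwa [hν _ ha0, log_exp, Int.dvd_neg]
  obtain ⟨α, hα⟩ : ∃ α : f.SplittingField, aeval α f = 0 := by
    obtain ⟨α, hα⟩ := (SplittingField.splits f).exists_eval_eq_zero (by
      rw [degree_map]; exact (natDegree_pos_iff_degree_pos.mp hp.pos).ne')
    exact ⟨α, by rwa [← eval_map_algebraMap]⟩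
  have := IsGalois.of_separable_splitting_field (E := f.SplittingField) hsep
  have hint : IsIntegral K α := .of_finite K α
  have hirr : Irreducible f := by
    have := adjoin.finiteDimensional hint
    have hle := natDegree_le_finrank_of_aeval_eq_zero (R := R) K⟮α⟯ hmonic hp hcoeff hlog
      (α := AdjoinSimple.gen K α) (by
        apply (algebraMap K⟮α⟯ f.SplittingField).injective
        rw [← aeval_algebraMap_apply, AdjoinSimple.algebraMap_gen, hα, map_zero])
    rw [adjoin.finrank hint] at hle
    rw [eq_of_monic_of_dvd_of_natDegree_le (minpoly.monic hint) hmonic (minpoly.dvd K α hα) hle]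
    exact minpoly.irreducible hint
  refine ⟨hirr, ?_⟩
  have : Fact (Irreducible f) := ⟨hirr⟩
  have := (AdjoinRoot.powerBasis hmonic.ne_zero).finite
  have : Algebra.IsSeparable K (AdjoinRoot f) :=
    .of_algHom K f.SplittingField (AdjoinRoot.liftAlgHom f (Algebra.ofId K _) α hα)
  exact isDiscreteValuationRing_integralClosure_of_finrank_eq (AdjoinRoot f) hmonic hp hcoeff
    hlog (by rw [AdjoinRoot.aeval_eq, AdjoinRoot.mk_self])
    (AdjoinRoot.powerBasis hmonic.ne_zero).finrank hπ
end

section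
/- Let R ⊆ R'' be an extension of discrete valuation rings with R'' dominating R, with ramification index e ≤ p for a prime p. Suppose t ∈ R'' is a non-unit satisfying t^p = −b_{p−1}t^{p−1} − ⋯ − b_0 with b_i ∈ R, 0 < v_R(b_0) ≤ v_R(b_i) for all i, and p ∤ v_R(b_0). Then e = p. -/
/-!
Put `v = v_{R''}` and `k = v(t) ≥ 1`. In `t^p + b_{p-1}t^{p-1} + ⋯ + b_0 = 0` every middle term
has `v(b_i t^i) ≥ v(b_0) + i k > v(b_0)`, so the two remaining terms must have equal valuation:
`p k = v(b_0) = e · v_R(b_0)`. Hence `e ≠ 0`, and `p ∤ v_R(b_0)` forces `p ∣ e`, so `e = p`.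
-/

open IsDiscreteValuationRing

/-- One-slope case of the Newton polygon. -/
theorem AddValuation.succ_nsmul_eq_of_root {A : Type*} [CommRing A] (v : AddValuation A ℕ∞)
    {m : ℕ} {c : Fin (m + 1) → A} {t : A}
    (hroot : t ^ (m + 1) + ∑ i, c i * t ^ (i : ℕ) = 0) (ht : 0 < v t)
    (hc₀ : v (c 0) ≠ ⊤) (hmin : ∀ i, v (c 0) ≤ v (c i)) :
    (m + 1) • v t = v (c 0) := by
  have hhigher : v (c 0) < v (∑ i : Fin m, c i.succ * t ^ (i.succ : ℕ)) := by
    refine v.map_lt_sum hc₀ fun i _ => ?_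
    rw [v.map_mul, v.map_pow]
    calc v (c 0) < v (c 0) + (i.succ : ℕ) • v t :=
          by simpa using (ENat.add_lt_add_iff_left hc₀).2 (nsmul_pos ht (Nat.succ_ne_zero _))
      _ ≤ v (c i.succ) + (i.succ : ℕ) • v t := add_le_add_left (hmin _) _
  rw [Fin.sum_univ_succ, Fin.val_zero, pow_zero, mul_one] at hroot
  rw [← v.map_pow, eq_neg_of_add_eq_zero_left hroot, v.map_neg,
    v.map_add_eq_of_lt_left hhigher]

theorem IsDiscreteValuationRing.addVal_algebraMap_of_associated {R S : Type*} [CommRing R]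
    [CommRing S] [IsDomain S] [IsDiscreteValuationRing S] [Algebra R S]
    {π b : R} {ϖ : S} (hϖ : Irreducible ϖ) {e n : ℕ}
    (he : Associated (algebraMap R S π) (ϖ ^ e)) (hb : Associated b (π ^ n)) :
    addVal S (algebraMap R S b) = (e * n : ℕ) := by
  have hassoc : Associated (algebraMap R S b) (ϖ ^ (e * n)) := by
    rw [pow_mul]
    exact (hb.map (algebraMap R S)).trans (by rw [map_pow]; exact he.pow_pow)
  rw [(addVal_eq_iff_associated _ _).2 hassoc, hϖ.addVal_pow]

theorem Nat.Prime.eq_of_mul_eq_mul_of_not_dvd {p k e n : ℕ} (hp : p.Prime)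
    (h : p * k = e * n) (hk : k ≠ 0) (hn : ¬ p ∣ n) (hep : e ≤ p) : e = p := by
  have hpe : p ∣ e := (hp.dvd_mul.1 ⟨k, h.symm⟩).resolve_right hn
  have he : e ≠ 0 := by
    rintro rfl
    simp [hp.ne_zero, hk] at h
  exact hep.antisymm (Nat.le_of_dvd (Nat.pos_of_ne_zero he) hpe)

theorem statement3_general
    (R R'' : Type*) [CommRing R] [IsDomain R] [IsDiscreteValuationRing R]
    [CommRing R''] [IsDomain R''] [IsDiscreteValuationRing R'']
    [Algebra R R'']
    (p : ℕ) (hp : p.Prime)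
    (π : R) (ϖ : R'') (hϖ : Irreducible ϖ)
    -- ramification index `e ≤ p`:
    (e : ℕ) (he : Associated (algebraMap R R'' π) (ϖ ^ e)) (hep : e ≤ p)
    (t : R'') (ht : ¬ IsUnit t)
    (b : Fin p → R)
    (hteq : t ^ p = - ∑ i : Fin p, algebraMap R R'' (b i) * t ^ (i : ℕ))
    -- `v_R(b_0) = n 0` etc., `0 < v_R(b_0) ≤ v_R(b_i)`, `p ∤ v_R(b_0)`:
    (n : Fin p → ℕ) (hp0 : 0 < p)
    (hb0 : b ⟨0, hp0⟩ ≠ 0)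
    (hbn : ∀ i, b i ≠ 0 → Associated (b i) (π ^ n i))
    (hle : ∀ i, b i ≠ 0 → n ⟨0, hp0⟩ ≤ n i)
    (hndvd : ¬ p ∣ n ⟨0, hp0⟩) :
    e = p := by
  obtain ⟨m, rfl⟩ := Nat.exists_eq_add_one_of_ne_zero hp0.ne'
  have hval : ∀ i, b i ≠ 0 → addVal R'' (algebraMap R R'' (b i)) = (e * n i : ℕ) :=
    fun i hi => addVal_algebraMap_of_associated hϖ he (hbn i hi)
  have hmin (i) : addVal R'' (algebraMap R R'' (b 0)) ≤ addVal R'' (algebraMap R R'' (b i)) := by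
    by_cases hi : b i = 0
    · simp [hi]
    · rw [hval 0 hb0, hval i hi]
      exact_mod_cast Nat.mul_le_mul_left e (hle i hi)
  have htpos : 0 < addVal R'' t := pos_iff_ne_zero.2 (mt addVal_eq_zero_iff.1 ht)
  have hslope := (addVal R'').succ_nsmul_eq_of_root (add_eq_zero_iff_eq_neg.2 hteq) htpos
    (hval 0 hb0 ▸ ENat.natCast_ne_top _) hmin
  rw [hval 0 hb0] at hslope
  obtain ⟨k, hk⟩ := ENat.ne_top_iff_exists.1 fun htop : addVal R'' t = ⊤ => by
    rw [htop, nsmul_eq_mul, ENat.mul_top (by simp)] at hslope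
    exact ENat.top_ne_natCast _ hslope
  rw [← hk, nsmul_eq_mul] at hslope
  rw [← hk] at htpos
  exact hp.eq_of_mul_eq_mul_of_not_dvd (by exact_mod_cast hslope) (by exact_mod_cast htpos.ne')
    hndvd hep

/-- the ramification-index computation concluding the proof of
Lemma 2.3(ii).  Let `R ⊆ R''` be an extension of DVRs with `R''` dominating `R`, with
ramification index `e ≤ p`, `p` prime.  If a non-unit `t ∈ R''` satisfies
`t^p = −b_{p−1}t^{p−1} − ⋯ − b_0` with `b_i ∈ R`, `0 < v_R(b_0) ≤ v_R(b_i)` and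
`p ∤ v_R(b_0)`, then `e = p`. -/
theorem statement3
    (R R'' : Type*) [CommRing R] [IsDomain R] [IsDiscreteValuationRing R]
    [CommRing R''] [IsDomain R''] [IsDiscreteValuationRing R'']
    [Algebra R R''] (hinj : Function.Injective (algebraMap R R''))
    -- `R''` dominates `R`:
    (hloc : ∀ a : R, IsUnit (algebraMap R R'' a) → IsUnit a)
    (p : ℕ) (hp : p.Prime)
    (π : R) (hπ : Irreducible π) (ϖ : R'') (hϖ : Irreducible ϖ)
    -- ramification index `e ≤ p`:
    (e : ℕ) (he : Associated (algebraMap R R'' π) (ϖ ^ e)) (hep : e ≤ p)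
    (t : R'') (ht : ¬ IsUnit t)
    (b : Fin p → R)
    (hteq : t ^ p = - ∑ i : Fin p, algebraMap R R'' (b i) * t ^ (i : ℕ))
    -- `v_R(b_0) = n 0` etc., `0 < v_R(b_0) ≤ v_R(b_i)`, `p ∤ v_R(b_0)`:
    (n : Fin p → ℕ) (hp0 : 0 < p)
    (hb0 : b ⟨0, hp0⟩ ≠ 0)
    (hbn : ∀ i, b i ≠ 0 → Associated (b i) (π ^ n i))
    (hpos : 0 < n ⟨0, hp0⟩)
    (hle : ∀ i, b i ≠ 0 → n ⟨0, hp0⟩ ≤ n i)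
    (hndvd : ¬ p ∣ n ⟨0, hp0⟩) :
    e = p :=
  statement3_general R R'' p hp π ϖ hϖ e he hep t ht b hteq n hp0 hb0 hbn hle hndvd
end

section
/- Every valuation on a field K whose value group is order-isomorphic to ℤ^n with the lexicographic ordering decomposes uniquely as a composite v = v_1 ∘ v_2 ∘ ⋯ ∘ v_n where each v_i is a discrete rank 1 valuation on the residue field of v_1 ∘ ⋯ ∘ v_{i−1} (with the convention that the residue field of the empty composite is K). -/
/-!
Write `head` and `tail` for the projections of `ℤ^{n+1}` onto its first coordinate and onto the
remaining `n`. The coarsening `v₁ = head ∘ v` is a discrete rank one valuation, and `tail ∘ v`,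
restricted to the units of `O_{v₁}` and set to `0` on its maximal ideal, descends to a valuation
`w` on the residue field; by the lexicographic order, `v x ≤ 1` iff `v₁ x < 1`, or `v₁ x = 1` and
`w x̄ ≤ 1`.

For uniqueness, let `v₁'` be discrete of rank one with `O_v ⊆ O_{v₁'}`, so that `v x ≤ v y`
implies `v₁' x ≤ v₁' y`. Pick `u` with `v u = (1, 0, …, 0)`. If `head (v y) = 0` then
`v (y ^ k) < v u` for all `k : ℤ`, so `v₁' y = 1` because `ℤ` is archimedean; hence
`v₁' x = v₁' u ^ head (v x)` with `v₁' u > 1`, and `O_{v₁'} = O_{v₁}`. The second ring is then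
determined by the first through the residue map.
-/

open Function WithZero IsLocalRing

namespace Pi.Lex

variable {α : Type*} {m : ℕ}

theorem lt_iff_head_tail [LinearOrder α] {a b : Lex (Fin (m + 1) → α)} :
    a < b ↔ ofLex a 0 < ofLex b 0 ∨
      ofLex a 0 = ofLex b 0 ∧ toLex (Fin.tail (ofLex a)) < toLex (Fin.tail (ofLex b)) := by
  rw [← toLex_ofLex a, ← toLex_ofLex b, ← Fin.cons_self_tail (ofLex a),
    ← Fin.cons_self_tail (ofLex b)]
  exact Fin.pi_lex_lt_cons_cons _

theorem eq_iff_head_tail {a b : Lex (Fin (m + 1) → α)} :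
    a = b ↔ ofLex a 0 = ofLex b 0 ∧ toLex (Fin.tail (ofLex a)) = toLex (Fin.tail (ofLex b)) := by
  rw [← toLex_ofLex a, ← toLex_ofLex b, ← Fin.cons_self_tail (ofLex a),
    ← Fin.cons_self_tail (ofLex b), toLex_inj, Fin.cons_inj]
  simp

theorem head_mono [LinearOrder α] {a b : Lex (Fin (m + 1) → α)} (h : a ≤ b) :
    ofLex a 0 ≤ ofLex b 0 := by
  rcases h.lt_or_eq with h | rfl
  · rcases lt_iff_head_tail.1 h with h | ⟨h, -⟩
    exacts [h.le, h.le]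
  · rfl

theorem le_iff_tail_le_of_head_eq [LinearOrder α] {a b : Lex (Fin (m + 1) → α)}
    (h : ofLex a 0 = ofLex b 0) :
    a ≤ b ↔ toLex (Fin.tail (ofLex a)) ≤ toLex (Fin.tail (ofLex b)) := by
  rw [le_iff_lt_or_eq, le_iff_lt_or_eq, eq_iff_head_tail]
  exact or_congr (lt_iff_head_tail.trans (by simp [h]; exact Iff.rfl)) (by simp [h])

variable [AddCommGroup α]

def headHom : Lex (Fin (m + 1) → α) →+ α where
  toFun a := ofLex a 0
  map_zero' := rfl
  map_add' _ _ := rfl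

def tailHom : Lex (Fin (m + 1) → α) →+ Lex (Fin m → α) where
  toFun a := toLex (Fin.tail (ofLex a))
  map_zero' := rfl
  map_add' _ _ := rfl

noncomputable def headHom₀ : (Lex (Fin (m + 1) → α))ᵐ⁰ →*₀ αᵐ⁰ :=
  map' headHom.toMultiplicative

noncomputable def tailHom₀ : (Lex (Fin (m + 1) → α))ᵐ⁰ →*₀ (Lex (Fin m → α))ᵐ⁰ :=
  map' tailHom.toMultiplicative

@[simp] theorem headHom₀_exp (a : Lex (Fin (m + 1) → α)) :
    headHom₀ (exp a) = exp (ofLex a 0) := rfl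

@[simp] theorem tailHom₀_exp (a : Lex (Fin (m + 1) → α)) :
    tailHom₀ (exp a) = exp (toLex (Fin.tail (ofLex a))) := rfl

theorem headHom₀_surjective : Surjective (headHom₀ : (Lex (Fin (m + 1) → α))ᵐ⁰ → αᵐ⁰) :=
  map'_surjective_iff.2 fun a => ⟨.ofAdd (toLex (Fin.cons a.toAdd 0)), rfl⟩

variable [LinearOrder α]

theorem headHom₀_mono : Monotone (headHom₀ : (Lex (Fin (m + 1) → α))ᵐ⁰ → αᵐ⁰) :=
  map'_mono fun _ _ => head_mono

theorem le_iff_tailHom₀_le_of_headHom₀_eq {a b : (Lex (Fin (m + 1) → α))ᵐ⁰}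
    (h : headHom₀ a = headHom₀ b) : a ≤ b ↔ tailHom₀ a ≤ tailHom₀ b := by
  induction a using expRecOn <;> induction b using expRecOn
  · simp
  · exact (exp_ne_zero h.symm).elim
  · exact (exp_ne_zero h).elim
  · simpa using le_iff_tail_le_of_head_eq (by simpa using h)

end Pi.Lex

open Pi.Lex

namespace Valuation

variable {K : Type*} [Field K] {α : Type*} [AddCommGroup α] [LinearOrder α] [IsOrderedAddMonoid α]
  {m : ℕ} (v : Valuation K (Lex (Fin (m + 1) → α))ᵐ⁰)

noncomputable def lexHead : Valuation K αᵐ⁰ := v.map headHom₀ headHom₀_mono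

theorem lexHead_apply (x : K) : v.lexHead x = headHom₀ (v x) := rfl

theorem lexHead_surjective (hv : Surjective v) : Surjective v.lexHead :=
  headHom₀_surjective.comp hv

theorem lexHead_le_one (x : v.lexHead.valuationSubring) : v.lexHead x ≤ 1 := x.2

theorem lexHead_mul_eq_one_iff (x y : v.lexHead.valuationSubring) :
    v.lexHead ↑(x * y) = 1 ↔ v.lexHead x = 1 ∧ v.lexHead y = 1 := by
  rw [MulMemClass.coe_mul, map_mul]
  exact mul_eq_one_iff_of_one_le (α := αᵐ⁰ᵒᵈ) (v.lexHead_le_one x) (v.lexHead_le_one y)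

theorem lexHead_eq_one_of_le {x y : v.lexHead.valuationSubring} (h : v x ≤ v y)
    (hx : v.lexHead x = 1) : v.lexHead y = 1 :=
  le_antisymm (v.lexHead_le_one y) (hx ▸ headHom₀_mono h)

noncomputable def lexTailInteger :
    Valuation v.lexHead.valuationSubring (Lex (Fin m → α))ᵐ⁰ where
  toFun x := if v.lexHead x = 1 then tailHom₀ (v x) else 0
  map_zero' := by simp
  map_one' := by simp
  map_mul' x y := by
    simp only [v.lexHead_mul_eq_one_iff]
    split_ifs <;> simp_all
  map_add_le_max' x y := by
    have mono : ∀ z : v.lexHead.valuationSubring, v ↑(x + y) ≤ v z →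
        (if v.lexHead ↑(x + y) = 1 then tailHom₀ (v ↑(x + y)) else 0) ≤
          if v.lexHead z = 1 then tailHom₀ (v z) else 0 := by
      intro z hz
      split_ifs with hxy hz1
      · exact (le_iff_tailHom₀_le_of_headHom₀_eq (hxy.trans hz1.symm)).1 hz
      · exact absurd (v.lexHead_eq_one_of_le hz hxy) hz1
      all_goals exact zero_le
    rcases le_max_iff.1 (v.map_add x y) with h | h
    exacts [le_max_of_le_left (mono x h), le_max_of_le_right (mono y h)]

theorem lexTailInteger_apply (x : v.lexHead.valuationSubring) :
    v.lexTailInteger x = if v.lexHead x = 1 then tailHom₀ (v x) else 0 := rfl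

theorem maximalIdeal_le_supp_lexTailInteger :
    maximalIdeal v.lexHead.valuationSubring ≤ v.lexTailInteger.supp := fun x hx => by
  rw [mem_supp_iff, lexTailInteger_apply,
    if_neg ((Valuation.mem_maximalIdeal_iff _ _).1 hx).ne]

noncomputable def lexTail :
    Valuation (ResidueField v.lexHead.valuationSubring) (Lex (Fin m → α))ᵐ⁰ :=
  v.lexTailInteger.onQuot v.maximalIdeal_le_supp_lexTailInteger

theorem lexTail_residue (x : v.lexHead.valuationSubring) :
    v.lexTail (residue _ x) = v.lexTailInteger x := rfl

theorem lexTail_surjective (hv : Surjective v) : Surjective v.lexTail := by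
  intro c
  induction c using expRecOn with
  | zero => exact ⟨0, map_zero _⟩
  | exp t =>
    obtain ⟨x, hx⟩ := hv (exp (toLex (Fin.cons 0 (ofLex t))))
    have hx1 : v.lexHead x = 1 := by simp [lexHead_apply, hx]
    refine ⟨residue _ ⟨x, hx1.le⟩, ?_⟩
    simp [lexTail_residue, lexTailInteger_apply, hx1, hx]

theorem lexTailInteger_le_one_iff (x : v.lexHead.valuationSubring) :
    v.lexTailInteger x ≤ 1 ↔ v x ≤ 1 := by
  rw [lexTailInteger_apply]
  split_ifs with hx
  · rw [le_iff_tailHom₀_le_of_headHom₀_eq (a := v x) (b := 1) (by rwa [map_one]), map_one]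
  · refine iff_of_true zero_le (headHom₀_mono.reflect_lt ?_).le
    rw [← lexHead_apply, map_one]
    exact lt_of_le_of_ne (v.lexHead_le_one x) hx

theorem mem_valuationSubring_iff_residue_mem_lexTail (x : K) :
    x ∈ v.valuationSubring ↔
      ∃ hx : x ∈ v.lexHead.valuationSubring, residue _ ⟨x, hx⟩ ∈ v.lexTail.valuationSubring := by
  simp only [mem_valuationSubring_iff, lexTail_residue, lexTailInteger_le_one_iff, exists_prop]
  refine (and_iff_right_of_imp fun hx => ?_).symm
  simpa [lexHead_apply] using headHom₀_mono hx

theorem le_of_valuationSubring_le {Γ Γ' : Type*} [LinearOrderedCommGroupWithZero Γ]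
    [LinearOrderedCommGroupWithZero Γ'] {v : Valuation K Γ} {v' : Valuation K Γ'}
    (h : v.valuationSubring ≤ v'.valuationSubring) {x y : K} (hxy : v x ≤ v y) : v' x ≤ v' y := by
  rcases eq_or_ne y 0 with rfl | hy
  · simp_all
  have hxy' : x / y ∈ v.valuationSubring := by
    rwa [mem_valuationSubring_iff, map_div₀, div_le_one₀ (zero_lt_iff.2 (v.ne_zero_iff.2 hy))]
  simpa [mem_valuationSubring_iff, div_le_one₀ (zero_lt_iff.2 (v'.ne_zero_iff.2 hy))] using h hxy'

end Valuation

theorem WithZero.eq_one_of_forall_zpow_le {a b : ℤᵐ⁰} (ha : a ≠ 0) (h : ∀ k : ℤ, a ^ k ≤ b) :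
    a = 1 := by
  have hb : b ≠ 0 := (zero_lt_one.trans_le (by simpa using h 0)).ne'
  lift a to ℤ using ha
  lift b to ℤ using hb
  simp only [← exp_zsmul, exp_le_exp, smul_eq_mul] at h
  rw [exp_eq_one]
  by_contra ha
  have := mul_self_pos.2 ha
  nlinarith [h 0, h ((b + 1) * a)]

namespace Valuation

variable {K : Type*} [Field K] {m : ℕ} {v : Valuation K (Lex (Fin (m + 1) → ℤ))ᵐ⁰}
  {v₁ : Valuation K ℤᵐ⁰} {u : K}

theorem eq_one_of_lexHead_eq_one (hle : v.valuationSubring ≤ v₁.valuationSubring)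
    (hu : v.lexHead u = exp 1) {y : K} (hy : v.lexHead y = 1) : v₁ y = 1 := by
  refine eq_one_of_forall_zpow_le (b := v₁ u) ?_ fun k => ?_
  · exact v₁.ne_zero_iff.2 (v.lexHead.ne_zero_iff.1 (by rw [hy]; exact one_ne_zero))
  · rw [← map_zpow₀]
    refine le_of_valuationSubring_le hle (headHom₀_mono.reflect_lt ?_).le
    rw [← lexHead_apply, ← lexHead_apply, map_zpow₀, hy, one_zpow, hu]
    exact exp_lt_exp.2 zero_lt_one

theorem eq_zpow_log_lexHead (hle : v.valuationSubring ≤ v₁.valuationSubring)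
    (hu : v.lexHead u = exp 1) {x : K} (hx : x ≠ 0) : v₁ x = v₁ u ^ log (v.lexHead x) := by
  set k := log (v.lexHead x)
  have hu0 : u ≠ 0 := v.lexHead.ne_zero_iff.1 (by rw [hu]; exact exp_ne_zero)
  have hk : v.lexHead (x * u ^ (-k)) = 1 := by
    rw [map_mul, map_zpow₀, hu, ← exp_log (v.lexHead.ne_zero_iff.2 hx), ← exp_zsmul, ← exp_add]
    simp [k]
  calc v₁ x = v₁ (x * u ^ (-k) * u ^ k) := by
        rw [mul_assoc, ← zpow_add₀ hu0, neg_add_cancel, zpow_zero, mul_one]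
    _ = v₁ u ^ k := by rw [map_mul, eq_one_of_lexHead_eq_one hle hu hk, one_mul, map_zpow₀]

theorem valuationSubring_eq_lexHead_valuationSubring (hv : Surjective v) (hv₁ : Surjective v₁)
    (hle : v.valuationSubring ≤ v₁.valuationSubring) :
    v₁.valuationSubring = v.lexHead.valuationSubring := by
  obtain ⟨u, hu⟩ := hv (exp (toLex (Pi.single 0 1)))
  have hu₁ : v.lexHead u = exp 1 := by simp [lexHead_apply, hu]
  have one_lt_u : 1 < v₁ u := by
    refine lt_of_le_of_ne ?_ fun h1 => ?_
    · rw [← map_one v₁]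
      refine le_of_valuationSubring_le hle (headHom₀_mono.reflect_lt ?_).le
      rw [← lexHead_apply, ← lexHead_apply, map_one, hu₁]
      exact exp_lt_exp.2 zero_lt_one
    · obtain ⟨x, hx⟩ := hv₁ (exp 1)
      have hx0 : x ≠ 0 := v₁.ne_zero_iff.1 (by rw [hx]; exact exp_ne_zero)
      rw [eq_zpow_log_lexHead hle hu₁ hx0, ← h1, one_zpow] at hx
      exact (exp_lt_exp.2 zero_lt_one).ne hx
  ext x
  rcases eq_or_ne x 0 with rfl | hx
  · simp
  rw [mem_valuationSubring_iff, mem_valuationSubring_iff, eq_zpow_log_lexHead hle hu₁ hx,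
    zpow_le_one_iff_right₀ one_lt_u, log_le_iff_le_exp (v.lexHead.ne_zero_iff.2 hx), exp_zero]

end Valuation

theorem ValuationSubring.eq_of_forall_mem_iff_residue_mem {K : Type*} [Field K]
    {A O : ValuationSubring K} {B B' : ValuationSubring (ResidueField A)}
    (hB : ∀ x, x ∈ O ↔ ∃ hx : x ∈ A, residue A ⟨x, hx⟩ ∈ B)
    (hB' : ∀ x, x ∈ O ↔ ∃ hx : x ∈ A, residue A ⟨x, hx⟩ ∈ B') : B = B' := by
  ext ξ
  obtain ⟨x, rfl⟩ := residue_surjective ξ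
  simpa using (hB x).symm.trans (hB' x)

theorem statement5_general
    (K : Type*) [Field K] (n : ℕ)
    (v : Valuation K (WithZero (Multiplicative (Lex (Fin (n + 1) → ℤ)))))
    (hv : Surjective v) :
    ∃! P : Σ O₁ : ValuationSubring K, ValuationSubring (IsLocalRing.ResidueField O₁),
      (∃ v₁ : Valuation K (WithZero (Multiplicative ℤ)),
          Surjective v₁ ∧ v₁.valuationSubring = P.1) ∧
      (∃ w : Valuation (IsLocalRing.ResidueField P.1)
            (WithZero (Multiplicative (Lex (Fin n → ℤ)))),
          Surjective w ∧ w.valuationSubring = P.2) ∧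
      (∀ x : K, x ∈ v.valuationSubring ↔
        ∃ hx : x ∈ P.1, IsLocalRing.residue P.1 ⟨x, hx⟩ ∈ P.2) := by
  refine ⟨⟨v.lexHead.valuationSubring, v.lexTail.valuationSubring⟩,
    ⟨⟨_, v.lexHead_surjective hv, rfl⟩, ⟨_, v.lexTail_surjective hv, rfl⟩,
      v.mem_valuationSubring_iff_residue_mem_lexTail⟩, ?_⟩
  rintro ⟨O₁, O₂⟩ ⟨⟨v₁, hv₁, hO₁ : v₁.valuationSubring = O₁⟩, -, hmem⟩
  obtain rfl : O₁ = v.lexHead.valuationSubring :=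
    hO₁ ▸ Valuation.valuationSubring_eq_lexHead_valuationSubring hv hv₁
      fun x hx => hO₁ ▸ ((hmem x).1 hx).1
  exact Sigma.ext rfl (heq_of_eq (ValuationSubring.eq_of_forall_mem_iff_residue_mem hmem
    v.mem_valuationSubring_iff_residue_mem_lexTail))

/-- Lemma 3.9(ii).  Every discrete valuation of rank `n+1` on a field `K`
(value group `ℤ^{n+1}` with the lexicographic ordering) decomposes uniquely as a composite
`v = v₁ ∘ w`, where `v₁` is a discrete rank `1` valuation on `K` and `w` is a discrete rank
`n` valuation on the residue field `Kv₁`; iterating this unique decomposition yields the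
unique decomposition `v = v₁ ∘ v₂ ∘ ⋯ ∘ v_{n+1}` into discrete rank `1` valuations on the
successive residue fields.  (Uniqueness is at the level of the corresponding valuation
subrings, which is what determines the `v_i` up to equivalence.) -/
theorem statement5
    (K : Type*) [Field K] (n : ℕ) [WellFoundedLT (Fin (n + 1))] [WellFoundedLT (Fin n)]
    (v : Valuation K (WithZero (Multiplicative (Lex (Fin (n + 1) → ℤ)))))
    (hv : Surjective v) :
    ∃! P : Σ O₁ : ValuationSubring K, ValuationSubring (IsLocalRing.ResidueField O₁),
      (∃ v₁ : Valuation K (WithZero (Multiplicative ℤ)),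
          Surjective v₁ ∧ v₁.valuationSubring = P.1) ∧
      (∃ w : Valuation (IsLocalRing.ResidueField P.1)
            (WithZero (Multiplicative (Lex (Fin n → ℤ)))),
          Surjective w ∧ w.valuationSubring = P.2) ∧
      (∀ x : K, x ∈ v.valuationSubring ↔
        ∃ hx : x ∈ P.1, IsLocalRing.residue P.1 ⟨x, hx⟩ ∈ P.2) :=
  statement5_general K n v hv
end

section
/- Let X be a normal integral Noetherian scheme with function field K, and let K' | K be a finite separable field extension such that the normalization Y of X in K' is étale over X. Then for any dominant morphism from the spectrum of a valuation ring O_v of K centered at a point x ∈ X (i.e. O_v dominates O_{X,x}), the valuation v is unramified in K'|K. -/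
/-!
An element `σ` of the inertia group acts trivially on the residue field of `W`. The normalization
`B` of `R` in `K'` is integral over `R ⊆ W`, so every `K`-embedding `g : K' → L` maps it into the
integrally closed ring `W`, and the two maps `g` and `σ ∘ g` from `B` to the local ring `W` agree
modulo its maximal ideal; as `B` is unramified over `R`, they are equal. So `σ` fixes `g(B)`, hence
`g(K')`, and hence all of `L`, which the fields `g(K')` generate.
-/

open IsLocalRing TensorProduct

namespace Algebra.FormallyUnramified

variable (R B : Type*) [CommRing R] [CommRing B] [Algebra R B]
  [FormallyUnramified R B] [EssFiniteType R B]

theorem one_sub_elem_mem_ideal : 1 - elem R B ∈ KaehlerDifferential.ideal R B := by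
  rw [KaehlerDifferential.ideal, RingHom.mem_ker, map_sub, map_one, lmul_elem, sub_self]

variable {R B}

/-- The image of the diagonal element `elem R B` is congruent to `1` modulo the maximal ideal,
hence a unit, and it annihilates every difference `g b - f b`. -/
theorem algHom_ext_of_sub_mem_maximalIdeal {S : Type*} [CommRing S] [IsLocalRing S] [Algebra R S]
    {f g : B →ₐ[R] S} (h : ∀ b, f b - g b ∈ maximalIdeal S) : f = g := by
  let H : B ⊗[R] B →ₐ[R] S := Algebra.TensorProduct.lift f g fun _ _ ↦ .all _ _
  have hH (b : B) : H (1 ⊗ₜ b - b ⊗ₜ 1) = g b - f b := by simp [H]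
  have hdiag : KaehlerDifferential.ideal R B ≤ (maximalIdeal S).comap H := by
    rw [← KaehlerDifferential.span_range_eq_ideal, Ideal.span_le]
    rintro _ ⟨b, rfl⟩
    simpa [hH] using neg_mem (h b)
  have hunit : IsUnit (H (elem R B)) := by
    simpa using isUnit_one_sub_self_of_mem_nonunits _ (hdiag (one_sub_elem_mem_ideal R B))
  ext b
  have hb := congrArg H (one_tmul_sub_tmul_one_mul_elem (R := R) b)
  rw [map_mul, hH, map_zero, hunit.mul_left_eq_zero, sub_eq_zero] at hb
  exact hb.symm

end Algebra.FormallyUnramified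

namespace ValuationSubring

variable {K L : Type*} [Field K] [Field L] [Algebra K L] {W : ValuationSubring L}

theorem mem_of_isIntegral {x : L} (hx : IsIntegral W x) : x ∈ W := by
  obtain ⟨y, rfl⟩ := IsIntegrallyClosed.isIntegral_iff.mp hx
  exact y.2

theorem map_mem_of_isIntegral {R A : Type*} [CommRing R] [CommRing A] [Algebra R A]
    (ψ : A →+* L) (hR : ∀ r, ψ (algebraMap R A r) ∈ W) {a : A} (ha : IsIntegral R a) : ψ a ∈ W :=
  mem_of_isIntegral (ha.map_of_comp_eq ((ψ.comp (algebraMap R A)).codRestrict W hR) ψ rfl)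

theorem smul_sub_mem_maximalIdeal_of_mem_inertiaSubgroup {σ : W.decompositionSubgroup K}
    (hσ : σ ∈ inertiaSubgroup K W) (a : W) : σ • a - a ∈ maximalIdeal W := by
  have hσa : residue W (σ • a) = residue W a :=
    (ResidueField.residue_smul _ σ a).trans (DFunLike.congr_fun hσ (residue W a))
  exact Ideal.Quotient.eq.mp hσa

theorem smul_eq_of_mem_inertiaSubgroup {R B : Type*} [CommRing R] [CommRing B] [Algebra R B]
    [Algebra.FormallyUnramified R B] [Algebra.EssFiniteType R B]
    {σ : W.decompositionSubgroup K} (hσ : σ ∈ inertiaSubgroup K W) (φ : B →+* W)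
    (hR : ∀ r, σ • φ (algebraMap R B r) = φ (algebraMap R B r)) (b : B) :
    σ • φ b = φ b := by
  let : Algebra R W := (φ.comp (algebraMap R B)).toAlgebra
  let f : B →ₐ[R] W := { φ with commutes' := fun _ ↦ rfl }
  let g : B →ₐ[R] W :=
    { (MulSemiringAction.toRingHom _ W σ).comp φ with commutes' := hR }
  have hfg : g = f := Algebra.FormallyUnramified.algHom_ext_of_sub_mem_maximalIdeal
    fun b ↦ smul_sub_mem_maximalIdeal_of_mem_inertiaSubgroup hσ (φ b)
  exact congr($hfg b)

end ValuationSubring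

theorem AlgEquiv.eq_one_of_eqOn_of_adjoin_eq_top {K L : Type*} [Field K] [Field L] [Algebra K L]
    {s : Set L} (hs : IntermediateField.adjoin K s = ⊤) {σ : L ≃ₐ[K] L} (h : ∀ x ∈ s, σ x = x) :
    σ = 1 := by
  have hadj : (σ : L →ₐ[K] L).comp (IntermediateField.adjoin K s).val =
      (IntermediateField.adjoin K s).val :=
    IntermediateField.adjoin_algHom_ext K fun x hx ↦ h x hx
  ext x
  exact congr($hadj ⟨x, hs ▸ IntermediateField.mem_top⟩)

theorem statement19_general
    (R : Type u) [CommRing R] [IsDomain R]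
    (K : Type u) [Field K] [Algebra R K] [IsFractionRing R K]
    (K' : Type u) [Field K'] [Algebra K K'] [FiniteDimensional K K']
    [Algebra R K'] [IsScalarTower R K K']
    -- the normalization `B` of `R` in `K'` is finite étale over `R`:
    [Algebra.Etale R ↥(integralClosure R K')]
    -- `v` a valuation of `K` whose valuation ring `O_v` dominates `R` (center `x ∈ X`):
    (Ov : ValuationSubring K)
    (hcen : ∀ r : R, algebraMap R K r ∈ Ov)
    -- `L|K` a Galois closure of `K'|K`:
    (L : Type u) [Field L] [Algebra K L]
    (hgen : IntermediateField.adjoin K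
      (⋃ g : K' →ₐ[K] L, Set.range g) = (⊤ : IntermediateField K L))
    -- `W` an extension of `v` to `L`:
    (W : ValuationSubring L)
    (hres : ∀ x : K, algebraMap K L x ∈ W ↔ x ∈ Ov) :
    ValuationSubring.inertiaSubgroup K W = ⊥ := by
  let B := integralClosure R K'
  have : IsFractionRing B K' := integralClosure.isFractionRing_of_finite_extension K K'
  refine (Subgroup.eq_bot_iff_forall _).2 fun σ hσ ↦ Subtype.ext ?_
  have hfix (g : K' →ₐ[K] L) : (σ.1 : L →+* L).comp (g : K' →+* L) = g := by
    have hgR (r : R) : g (algebraMap R K' r) = algebraMap K L (algebraMap R K r) := by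
      rw [IsScalarTower.algebraMap_apply R K K', g.commutes]
    let φ : B →+* W := ((g : K' →+* L).comp (algebraMap B K')).codRestrict W fun b ↦
      ValuationSubring.map_mem_of_isIntegral (R := R) _
        (fun r ↦ (hgR r).symm ▸ (hres _).2 (hcen r)) (Algebra.IsIntegral.isIntegral b)
    refine IsLocalization.ringHom_ext (nonZeroDivisors B) (RingHom.ext fun b ↦ ?_)
    refine congr($(ValuationSubring.smul_eq_of_mem_inertiaSubgroup (R := R) hσ φ (fun r ↦ ?_) b).1)
    refine Subtype.ext ?_
    change σ.1 (g (algebraMap R K' r)) = g (algebraMap R K' r)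
    rw [hgR, AlgEquiv.commutes]
  refine AlgEquiv.eq_one_of_eqOn_of_adjoin_eq_top hgen ?_
  rintro _ ⟨_, ⟨g, rfl⟩, y, rfl⟩
  exact congr($(hfix g) y)

/-- Section 2, Remark 2.2 / Definition of (un)ramifiedness.
Let `X` be a normal integral Noetherian scheme with function field `K` and let `K'|K` be a
finite separable extension such that the normalization `Y` of `X` in `K'` is étale over
`X`.  Localizing at a point `x ∈ X`, this means: let `R = O_{X,x}` be a normal Noetherian
local domain with fraction field `K` such that the integral closure `B` of `R` in `K'` is
(finite) étale over `R`.  Then every valuation `v` of `K` whose valuation ring dominates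
`R` (i.e. is centered at `x`) is unramified in `K'|K`: for every finite Galois extension
`L|K` containing `K'` and generated by the images of `K'` (the Galois closure), and every
extension `W` of `v` to `L`, the inertia group `T_W(L|K)` is trivial. -/
theorem statement19
    (R : Type u) [CommRing R] [IsDomain R] [IsNoetherianRing R] [IsLocalRing R]
    [IsIntegrallyClosed R]
    (K : Type u) [Field K] [Algebra R K] [IsFractionRing R K]
    (K' : Type u) [Field K'] [Algebra K K'] [FiniteDimensional K K']
    [Algebra.IsSeparable K K']
    [Algebra R K'] [IsScalarTower R K K']
    -- the normalization `B` of `R` in `K'` is finite étale over `R`: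
    [Module.Finite R (integralClosure R K')] [Algebra.Etale R ↥(integralClosure R K')]
    -- `v` a valuation of `K` whose valuation ring `O_v` dominates `R` (center `x ∈ X`):
    (Ov : ValuationSubring K)
    (hcen : ∀ r : R, algebraMap R K r ∈ Ov)
    (hdom : ∀ r : R, ¬ IsUnit r → ¬ IsUnit (⟨algebraMap R K r, hcen r⟩ : Ov))
    -- `L|K` a Galois closure of `K'|K`:
    (L : Type u) [Field L] [Algebra K L] [Algebra K' L] [IsScalarTower K K' L]
    [FiniteDimensional K L] [IsGalois K L]
    (hgen : IntermediateField.adjoin K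
      (⋃ g : K' →ₐ[K] L, Set.range g) = (⊤ : IntermediateField K L))
    -- `W` an extension of `v` to `L`:
    (W : ValuationSubring L)
    (hres : ∀ x : K, algebraMap K L x ∈ W ↔ x ∈ Ov) :
    ValuationSubring.inertiaSubgroup K W = ⊥ :=
  statement19_general R K K' Ov hcen L hgen W hres
end
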